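/- The hierarchical (hat) basis functions up to level ℓ span the space of continuous piecewise linear functions on the uniform grid of mesh size 2^{-ℓ} on [0,1]; moreover, the decomposition V_ℓ = W_0 ⊕ W_1 ⊕ … ⊕ W_ℓ is a direct sum, i.e., the collection {ψ_{m,j} : 0 ≤ m ≤ ℓ, j ∈ B_m} is linearly independent and has cardinality 2^ℓ + 1. -/

import Mathlib

open MeasureTheory Filter Real Set
noncomputable section

/-- The hierarchical (hat) basis function of level `m` and index `j`:
`ψ_{m,j}(x) = max(0, 1 - |x/h_m - j|)` with `h_m = 2^{-m}`. -/
def hatFn (m j : ℕ) (x : ℝ) : ℝ := max 0 (1 - |x * 2^m - (j:ℝ)|)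

/-- The hierarchical index set up to level `ℓ`: pairs `(m, j)` with `m ≤ ℓ` and `j ∈ B_m`,
where `B_0 = {0,1}` and `B_m = {j odd, 1 ≤ j ≤ 2^m - 1}` for `m > 0`. -/
def hierIdx (ℓ : ℕ) : Set (ℕ × ℕ) :=
  {p | p.1 ≤ ℓ ∧ ((p.1 = 0 ∧ p.2 ≤ 1) ∨ (p.1 ≠ 0 ∧ Odd p.2 ∧ p.2 < 2^p.1))}

/-!
Evaluate at the grid points `n / 2^ℓ`, `0 ≤ n ≤ 2^ℓ`. The hat `ψ_{m,j}` peaks at the grid point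
of index `j 2^{ℓ-m}`, and `(m, j) ↦ j 2^{ℓ-m}` is a bijection from the hierarchical indices onto
`{0, …, 2^ℓ}` (write `n = 2^k · odd`); this gives the count. Ordered by level, the nodal matrix
`ψ_p(x_q)` is block unitriangular: `ψ_{m,j}` vanishes at the peaks of all other hats of level at
most `m`, because the new indices of a level `m > 0` are odd. Hence the hats are independent.
Each `ψ_{m,j}` with `m ≤ ℓ` is affine on every cell of level `ℓ`, and a piecewise affine function
is determined by its `2^ℓ + 1` nodal values, so the piecewise affine space has dimension at most
`2^ℓ + 1` and the span of the hats fills it.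
-/

namespace HierarchicalBasis

def dyadicIndex (ℓ : ℕ) (p : ℕ × ℕ) : ℕ := p.2 * 2 ^ (ℓ - p.1)

lemma dyadicIndex_eq_mul {ℓ m : ℕ} {p : ℕ × ℕ} (hpm : p.1 ≤ m) (hm : m ≤ ℓ) :
    dyadicIndex ℓ p = p.2 * 2 ^ (m - p.1) * 2 ^ (ℓ - m) := by
  rw [dyadicIndex, mul_assoc, ← pow_add]
  congr 2
  omega

lemma snd_le_two_pow {ℓ : ℕ} {p : ℕ × ℕ} (hp : p ∈ hierIdx ℓ) : p.2 ≤ 2 ^ p.1 := by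
  rcases hp.2 with ⟨-, h⟩ | ⟨-, -, h⟩
  · exact h.trans Nat.one_le_two_pow
  · exact h.le

lemma dyadicIndex_le {ℓ : ℕ} {p : ℕ × ℕ} (hp : p ∈ hierIdx ℓ) : dyadicIndex ℓ p ≤ 2 ^ ℓ :=
  calc p.2 * 2 ^ (ℓ - p.1) ≤ 2 ^ p.1 * 2 ^ (ℓ - p.1) := Nat.mul_le_mul_right _ (snd_le_two_pow hp)
    _ = 2 ^ ℓ := by rw [← pow_add, Nat.add_sub_cancel' hp.1]

lemma mul_two_pow_eq_iff {ℓ : ℕ} {p q : ℕ × ℕ} (hp : p ∈ hierIdx ℓ) (hle : q.1 ≤ p.1) :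
    q.2 * 2 ^ (p.1 - q.1) = p.2 ↔ q = p := by
  refine ⟨fun h => ?_, by rintro rfl; simp⟩
  rcases hle.eq_or_lt with heq | hlt
  · rw [heq, Nat.sub_self, pow_zero, mul_one] at h
    exact Prod.ext heq h
  · obtain ⟨-, hodd, -⟩ := hp.2.resolve_left fun h0 => by omega
    have heven : Even (q.2 * 2 ^ (p.1 - q.1)) :=
      (Nat.even_pow.2 ⟨even_two, by omega⟩).mul_left _
    exact absurd (h ▸ heven) (Nat.not_even_iff_odd.2 hodd)

lemma dyadicIndex_injOn (ℓ : ℕ) : InjOn (dyadicIndex ℓ) (hierIdx ℓ) := by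
  suffices H : ∀ p ∈ hierIdx ℓ, ∀ q : ℕ × ℕ, q.1 ≤ p.1 →
      dyadicIndex ℓ q = dyadicIndex ℓ p → q = p by
    intro p hp q hq h
    rcases le_total q.1 p.1 with hle | hle
    exacts [(H p hp q hle h.symm).symm, H q hq p hle h]
  intro p hp q hle h
  refine (mul_two_pow_eq_iff hp hle).1 (Nat.eq_of_mul_eq_mul_right (pow_pos two_pos (ℓ - p.1)) ?_)
  rw [← dyadicIndex_eq_mul hle hp.1, h, dyadicIndex]

lemma exists_dyadicIndex_eq {ℓ n : ℕ} (hn : n ≤ 2 ^ ℓ) :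
    ∃ p ∈ hierIdx ℓ, dyadicIndex ℓ p = n := by
  rcases Nat.eq_zero_or_pos n with rfl | hpos
  · exact ⟨(0, 0), ⟨Nat.zero_le _, .inl ⟨rfl, zero_le_one⟩⟩, zero_mul _⟩
  rcases hn.eq_or_lt with rfl | hlt
  · exact ⟨(0, 1), ⟨Nat.zero_le _, .inl ⟨rfl, le_rfl⟩⟩, by simp [dyadicIndex]⟩
  obtain ⟨k, j, hj, rfl⟩ := Nat.exists_eq_two_pow_mul_odd hpos.ne'
  have hk : k < ℓ := (Nat.pow_lt_pow_iff_right (by norm_num)).1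
    ((Nat.le_mul_of_pos_right _ hj.pos).trans_lt hlt)
  have hsplit : 2 ^ ℓ = 2 ^ k * 2 ^ (ℓ - k) := by rw [← pow_add, Nat.add_sub_cancel' hk.le]
  refine ⟨(ℓ - k, j), ⟨Nat.sub_le _ _, .inr ⟨by omega, hj, ?_⟩⟩, ?_⟩
  · exact Nat.lt_of_mul_lt_mul_left (hsplit ▸ hlt)
  · simp [dyadicIndex, Nat.sub_sub_self hk.le, mul_comm]

def hierIdxEquivFin (ℓ : ℕ) : hierIdx ℓ ≃ Fin (2 ^ ℓ + 1) :=
  Equiv.ofBijective (fun p => ⟨dyadicIndex ℓ p, Nat.lt_succ_of_le (dyadicIndex_le p.2)⟩)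
    ⟨fun p q h => Subtype.ext (dyadicIndex_injOn ℓ p.2 q.2 (congrArg Fin.val h)),
     fun n => let ⟨p, hp, h⟩ := exists_dyadicIndex_eq (Nat.lt_succ_iff.1 n.2)
       ⟨⟨p, hp⟩, Fin.ext h⟩⟩

instance (ℓ : ℕ) : Fintype (hierIdx ℓ) := Fintype.ofEquiv _ (hierIdxEquivFin ℓ).symm

lemma card_hierIdx (ℓ : ℕ) : Fintype.card (hierIdx ℓ) = 2 ^ ℓ + 1 := by
  rw [Fintype.card_congr (hierIdxEquivFin ℓ), Fintype.card_fin]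

lemma hatFn_natCast_div (m j n : ℕ) : hatFn m j (n / 2 ^ m) = if n = j then 1 else 0 := by
  rw [hatFn, div_mul_cancel₀ _ (by positivity)]
  split_ifs with h
  · simp [h]
  · have h1 : (1 : ℝ) ≤ |(n : ℝ) - j| := by
      exact_mod_cast Int.one_le_abs (by omega : (n : ℤ) - j ≠ 0)
    exact max_eq_left (by linarith)

lemma tent_affineOn_Icc (i j : ℕ) :
    ∃ a b : ℝ, ∀ t ∈ Icc (i : ℝ) (i + 1), max 0 (1 - |t - j|) = a * t + b := by
  rcases (by omega : i + 2 ≤ j ∨ i + 1 = j ∨ i = j ∨ j + 1 ≤ i) with h | rfl | rfl | h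
  · have h' : (i : ℝ) + 2 ≤ j := by exact_mod_cast h
    refine ⟨0, 0, fun t ⟨_, ht⟩ => max_eq_left ?_ |>.trans (by ring)⟩
    linarith [neg_le_abs (t - j)]
  · refine ⟨1, 1 - (i + 1 : ℕ), fun t ⟨ht, ht'⟩ => ?_⟩
    push_cast at *
    rw [abs_of_nonpos (by linarith), max_eq_right (by linarith)]
    ring
  · refine ⟨-1, 1 + i, fun t ⟨ht, ht'⟩ => ?_⟩
    rw [abs_of_nonneg (by linarith), max_eq_right (by linarith)]
    ring
  · have h' : (j : ℝ) + 1 ≤ i := by exact_mod_cast h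
    refine ⟨0, 0, fun t ⟨ht, _⟩ => max_eq_left ?_ |>.trans (by ring)⟩
    linarith [le_abs_self (t - j)]

def gridCell (ℓ k : ℕ) : Set ℝ := Icc (k / 2 ^ ℓ) ((k + 1) / 2 ^ ℓ)

lemma mem_gridCell {ℓ k : ℕ} {x : ℝ} : x ∈ gridCell ℓ k ↔ k ≤ x * 2 ^ ℓ ∧ x * 2 ^ ℓ ≤ k + 1 := by
  rw [gridCell, mem_Icc, div_le_iff₀ (by positivity), le_div_iff₀ (by positivity)]

lemma mul_two_pow_mem_Icc_of_mem_gridCell {m ℓ k : ℕ} (hm : m ≤ ℓ) {x : ℝ} (hx : x ∈ gridCell ℓ k) :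
    x * 2 ^ m ∈ Icc ((k / 2 ^ (ℓ - m) : ℕ) : ℝ) ((k / 2 ^ (ℓ - m) : ℕ) + 1) := by
  set d := ℓ - m
  set i := k / 2 ^ d
  have hlo : i * 2 ^ d ≤ k := Nat.div_mul_le_self k _
  have hhi : k + 1 ≤ (i + 1) * 2 ^ d := Nat.lt_mul_of_div_lt (Nat.lt_succ_self i) (by positivity)
  have hlo' : (i : ℝ) * 2 ^ d ≤ k := by exact_mod_cast hlo
  have hhi' : (k : ℝ) + 1 ≤ (i + 1) * 2 ^ d := by exact_mod_cast hhi
  have hsplit : x * 2 ^ ℓ = x * 2 ^ m * 2 ^ d := by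
    rw [mul_assoc, ← pow_add, Nat.add_sub_cancel' hm]
  obtain ⟨h1, h2⟩ := mem_gridCell.1 hx
  have hd : (0 : ℝ) < 2 ^ d := by positivity
  constructor
  · exact le_of_mul_le_mul_right (by linarith) hd
  · exact le_of_mul_le_mul_right (by linarith) hd

lemma hatFn_affineOn_gridCell {m ℓ : ℕ} (j k : ℕ) (hm : m ≤ ℓ) :
    ∃ a b : ℝ, ∀ x ∈ gridCell ℓ k, hatFn m j x = a * x + b := by
  obtain ⟨a, b, h⟩ := tent_affineOn_Icc (k / 2 ^ (ℓ - m)) j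
  refine ⟨a * 2 ^ m, b, fun x hx => ?_⟩
  rw [hatFn, h _ (mul_two_pow_mem_Icc_of_mem_gridCell hm hx)]
  ring

lemma exists_mem_gridCell (ℓ : ℕ) {x : ℝ} (hx : x ∈ Icc (0 : ℝ) 1) :
    ∃ j < 2 ^ ℓ, x ∈ gridCell ℓ j := by
  set t := x * 2 ^ ℓ
  have ht0 : 0 ≤ t := mul_nonneg hx.1 (by positivity)
  have ht1 : t ≤ 2 ^ ℓ := mul_le_of_le_one_left (by positivity) hx.2
  have hlast : ((2 ^ ℓ - 1 : ℕ) : ℝ) + 1 = 2 ^ ℓ := by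
    rw [Nat.cast_sub Nat.one_le_two_pow]; push_cast; ring
  refine ⟨min ⌊t⌋₊ (2 ^ ℓ - 1), by have := @Nat.one_le_two_pow ℓ; omega, mem_gridCell.2 ⟨?_, ?_⟩⟩
  · exact (Nat.cast_le.2 (min_le_left _ _)).trans (Nat.floor_le ht0)
  · rcases min_choice ⌊t⌋₊ (2 ^ ℓ - 1) with h | h <;> rw [h]
    · exact (Nat.lt_floor_add_one t).le
    · linarith

def pwAffine (ℓ : ℕ) : Submodule ℝ (Icc (0 : ℝ) 1 → ℝ) where
  carrier := {f | Continuous f ∧ ∀ j < 2 ^ ℓ, ∃ a b : ℝ,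
    ∀ x : Icc (0 : ℝ) 1, (x : ℝ) ∈ gridCell ℓ j → f x = a * x + b}
  add_mem' := by
    rintro f g ⟨hf, hf'⟩ ⟨hg, hg'⟩
    refine ⟨hf.add hg, fun j hj => ?_⟩
    obtain ⟨a, b, hab⟩ := hf' j hj
    obtain ⟨c, d, hcd⟩ := hg' j hj
    exact ⟨a + c, b + d, fun x hx => by simp only [Pi.add_apply, hab x hx, hcd x hx]; ring⟩
  zero_mem' := ⟨continuous_const, fun _ _ => ⟨0, 0, fun _ _ => by simp⟩⟩
  smul_mem' := by
    rintro c f ⟨hf, hf'⟩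
    refine ⟨hf.const_smul c, fun j hj => ?_⟩
    obtain ⟨a, b, hab⟩ := hf' j hj
    exact ⟨c * a, c * b, fun x hx => by simp only [Pi.smul_apply, hab x hx, smul_eq_mul]; ring⟩

lemma continuous_hatFn (m j : ℕ) : Continuous (hatFn m j) := by
  unfold hatFn
  fun_prop

lemma hatFn_mem_pwAffine {ℓ m : ℕ} (j : ℕ) (hm : m ≤ ℓ) :
    (fun x : Icc (0 : ℝ) 1 => hatFn m j x) ∈ pwAffine ℓ := by
  refine ⟨(continuous_hatFn m j).comp continuous_subtype_val, fun k _ => ?_⟩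
  obtain ⟨a, b, hab⟩ := hatFn_affineOn_gridCell j k hm
  exact ⟨a, b, fun x hx => hab x hx⟩

def gridNode (ℓ : ℕ) (n : Fin (2 ^ ℓ + 1)) : Icc (0 : ℝ) 1 :=
  ⟨n / 2 ^ ℓ, by positivity,
    div_le_one_of_le₀ (by exact_mod_cast Nat.lt_succ_iff.1 n.2) (by positivity)⟩

lemma eq_zero_of_forall_gridNode_eq_zero {ℓ : ℕ} {f : Icc (0 : ℝ) 1 → ℝ} (hf : f ∈ pwAffine ℓ)
    (h0 : ∀ n, f (gridNode ℓ n) = 0) : f = 0 := by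
  funext x
  obtain ⟨j, hj, hxj⟩ := exists_mem_gridCell ℓ x.2
  obtain ⟨a, b, hab⟩ := hf.2 j hj
  have hleft := (hab (gridNode ℓ ⟨j, by omega⟩) (mem_gridCell.2 (by simp [gridNode]))).symm.trans
    (h0 _)
  have hright :=
    (hab (gridNode ℓ ⟨j + 1, by omega⟩) (mem_gridCell.2 (by simp [gridNode]))).symm.trans (h0 _)
  simp only [gridNode, Nat.cast_add, Nat.cast_one] at hleft hright
  have ha : a = 0 := by
    have : a * (1 / 2 ^ ℓ) = 0 := by linear_combination hright - hleft
    simpa using this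
  rw [hab x hxj, Pi.zero_apply, ha, zero_mul, zero_add]
  simpa [ha] using hleft

def gridEval (ℓ : ℕ) : (Icc (0 : ℝ) 1 → ℝ) →ₗ[ℝ] (Fin (2 ^ ℓ + 1) → ℝ) :=
  LinearMap.funLeft ℝ ℝ (gridNode ℓ)

lemma injective_gridEval_domRestrict (ℓ : ℕ) :
    Function.Injective ((gridEval ℓ).domRestrict (pwAffine ℓ)) := by
  refine (injective_iff_map_eq_zero _).2 fun f hf => Subtype.ext ?_
  exact eq_zero_of_forall_gridNode_eq_zero f.2 (congrFun hf)

instance (ℓ : ℕ) : FiniteDimensional ℝ (pwAffine ℓ) :=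
  Module.Finite.of_injective _ (injective_gridEval_domRestrict ℓ)

lemma finrank_pwAffine_le (ℓ : ℕ) : Module.finrank ℝ (pwAffine ℓ) ≤ 2 ^ ℓ + 1 := by
  simpa using LinearMap.finrank_le_finrank_of_injective (injective_gridEval_domRestrict ℓ)

def hatFamily (ℓ : ℕ) (p : hierIdx ℓ) (x : Icc (0 : ℝ) 1) : ℝ := hatFn p.1.1 p.1.2 x

def nodalMatrix (ℓ : ℕ) : Matrix (hierIdx ℓ) (hierIdx ℓ) ℝ :=
  fun p q => hatFamily ℓ p (gridNode ℓ (hierIdxEquivFin ℓ q))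

lemma nodalMatrix_of_le {ℓ : ℕ} {p q : hierIdx ℓ} (hle : q.1.1 ≤ p.1.1) :
    nodalMatrix ℓ p q = if q = p then 1 else 0 := by
  have hnode : (gridNode ℓ (hierIdxEquivFin ℓ q) : ℝ) =
      ((q.1.2 * 2 ^ (p.1.1 - q.1.1) : ℕ) : ℝ) / 2 ^ p.1.1 := by
    change ((dyadicIndex ℓ q : ℕ) : ℝ) / 2 ^ ℓ = _
    have hsplit : (2 : ℝ) ^ ℓ = 2 ^ p.1.1 * 2 ^ (ℓ - p.1.1) := by
      rw [← pow_add, Nat.add_sub_cancel' p.2.1]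
    rw [dyadicIndex_eq_mul hle p.2.1, hsplit, Nat.cast_mul, Nat.cast_pow, Nat.cast_ofNat]
    exact mul_div_mul_right _ _ (by positivity)
  rw [nodalMatrix, hatFamily, hnode, hatFn_natCast_div]
  simp only [mul_two_pow_eq_iff p.2 hle, Subtype.ext_iff]

lemma blockTriangular_nodalMatrix (ℓ : ℕ) :
    (nodalMatrix ℓ).BlockTriangular fun p => p.1.1 := by
  intro p q hlt
  rw [nodalMatrix_of_le hlt.le, if_neg]
  rintro rfl
  exact lt_irrefl _ hlt

lemma det_nodalMatrix (ℓ : ℕ) : (nodalMatrix ℓ).det = 1 := by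
  rw [(blockTriangular_nodalMatrix ℓ).det]
  refine Finset.prod_eq_one fun m _ => ?_
  have hblock : (nodalMatrix ℓ).toSquareBlock (fun p => p.1.1) m = 1 := by
    ext p q
    rw [Matrix.toSquareBlock_def, Matrix.of_apply, nodalMatrix_of_le (q.2.trans p.2.symm).le,
      Matrix.one_apply]
    simp only [Subtype.ext_iff, eq_comm]
  rw [hblock, Matrix.det_one]

lemma linearIndependent_hatFamily (ℓ : ℕ) : LinearIndependent ℝ (hatFamily ℓ) :=
  LinearIndependent.of_comp (LinearMap.funLeft ℝ ℝ (gridNode ℓ ∘ hierIdxEquivFin ℓ))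
    (Matrix.linearIndependent_rows_of_det_ne_zero (A := nodalMatrix ℓ) (by simp [det_nodalMatrix]))

end HierarchicalBasis

open HierarchicalBasis

/-- the hierarchical basis functions `{ψ_{m,j} : m ≤ ℓ, j ∈ B_m}`, viewed as
functions on `[0,1]`, are linearly independent, there are `2^ℓ + 1` of them, and they span
exactly the space of continuous piecewise linear functions on the uniform grid of mesh
`2^{-ℓ}` on `[0,1]` (i.e. `V_ℓ = W_0 ⊕ ⋯ ⊕ W_ℓ`). -/
theorem hierarchical_basis_spans (ℓ : ℕ) :
    LinearIndependent ℝ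
      (fun p : hierIdx ℓ => fun x : Set.Icc (0:ℝ) 1 => hatFn p.1.1 p.1.2 (x:ℝ)) ∧
    Nat.card (hierIdx ℓ) = 2^ℓ + 1 ∧
    (Submodule.span ℝ
        (Set.range (fun p : hierIdx ℓ => fun x : Set.Icc (0:ℝ) 1 => hatFn p.1.1 p.1.2 (x:ℝ)))
        : Set (Set.Icc (0:ℝ) 1 → ℝ)) =
      {f | Continuous f ∧ ∀ j : ℕ, j < 2^ℓ → ∃ a b : ℝ,
        ∀ x : Set.Icc (0:ℝ) 1, (x:ℝ) ∈ Set.Icc ((j:ℝ)/2^ℓ) (((j:ℝ)+1)/2^ℓ) →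
          f x = a * (x:ℝ) + b} := by
  have hli := linearIndependent_hatFamily ℓ
  refine ⟨hli, by rw [Nat.card_eq_fintype_card, card_hierIdx], ?_⟩
  have hle : Submodule.span ℝ (range (hatFamily ℓ)) ≤ pwAffine ℓ :=
    Submodule.span_le.2 (range_subset_iff.2 fun p => hatFn_mem_pwAffine p.1.2 p.2.1)
  have hrank : Module.finrank ℝ (pwAffine ℓ) ≤
      Module.finrank ℝ (Submodule.span ℝ (range (hatFamily ℓ))) := by
    rw [finrank_span_eq_card hli, card_hierIdx]
    exact finrank_pwAffine_le ℓ
  exact congrArg SetLike.coe (Submodule.eq_of_le_of_finrank_le hle hrank)
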